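/- (Lemma 3, first part.) Let 0 < ρ < 1, Δ₁, Δ₂ ∈ (0,1), δ_i = 1 − Δ_i, c = ρ − √(δ₁δ₂), and assume Δ₁Δ₂ − c² > 0. Let ε = ε_Λ(√( δ₁(Δ₁Δ₂ − c²)/(1−ρ²) )). If ε < 1/2, then the L¹ (variation) distance between the mixture density f_{X̄,Ȳ}(x,y) = ∑_{a∈Λ} D_{Λ,√δ₁}(a)·f_Z(x − a, y − √(δ₂/δ₁)·a) and the bivariate Gaussian density f_{X,Y} with unit variances and correlation ρ satisfies ∫_{ℝ²} |f_{X̄,Ȳ}(x,y) − f_{X,Y}(x,y)| dx dy ≤ 4ε. -/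

import Mathlib

open Real

/-- The centered Gaussian density with standard deviation `σ`. -/
noncomputable def gpdf (σ x : ℝ) : ℝ :=
  (1 / (Real.sqrt (2 * Real.pi) * σ)) * Real.exp (-(x ^ 2) / (2 * σ ^ 2))

/-- The discrete Gaussian distribution over the lattice `Λ = bℤ` with parameter `σ`,
evaluated at the lattice point `b * k`. -/
noncomputable def dgauss (b σ : ℝ) (k : ℤ) : ℝ :=
  gpdf σ (b * k) / ∑' j : ℤ, gpdf σ (b * j)

/-- The flatness factor of the lattice `Λ = bℤ` at parameter `σ`. -/
noncomputable def flatness (b σ : ℝ) : ℝ :=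
  ⨆ x : ℝ, |b * (∑' k : ℤ, gpdf σ (x - b * k)) - 1|

/-- The bivariate Gaussian density with unit variances and correlation `ρ`. -/
noncomputable def fXY (ρ x y : ℝ) : ℝ :=
  (1 / (2 * Real.pi * Real.sqrt (1 - ρ ^ 2))) *
    Real.exp (-(x ^ 2 + y ^ 2 - 2 * ρ * x * y) / (2 * (1 - ρ ^ 2)))

/-- The centered bivariate Gaussian density with covariance matrix `[[Δ₁, c], [c, Δ₂]]`. -/
noncomputable def fZ (Δ₁ Δ₂ c z₁ z₂ : ℝ) : ℝ :=
  (1 / (2 * Real.pi * Real.sqrt (Δ₁ * Δ₂ - c ^ 2))) *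
    Real.exp (-(Δ₂ * z₁ ^ 2 + Δ₁ * z₂ ^ 2 - 2 * c * z₁ * z₂) / (2 * (Δ₁ * Δ₂ - c ^ 2)))

/-- The density of `(X̄, Ȳ) = (X̄' + Z₁, √(δ₂/δ₁) X̄' + Z₂)` where `X̄' ~ D_{Λ,√δ₁}`,
`Λ = bℤ`, and `(Z₁, Z₂)` has density `f_Z` with covariance `[[Δ₁, c], [c, Δ₂]]`,
`c = ρ − √(δ₁δ₂)`. -/
noncomputable def fXbarYbar2 (ρ Δ₁ Δ₂ b x y : ℝ) : ℝ :=
  ∑' k : ℤ, dgauss b (Real.sqrt (1 - Δ₁)) k *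
    fZ Δ₁ Δ₂ (ρ - Real.sqrt ((1 - Δ₁) * (1 - Δ₂))) (x - b * k)
      (y - Real.sqrt ((1 - Δ₂) / (1 - Δ₁)) * (b * k))


/-!
By Bayes' rule in the continuous model `X̄' ~ N(0, δ₁)`,
`f_{√δ₁}(t) f_Z(x - t, y - √(δ₂/δ₁) t) = f_{X,Y}(x, y) f_σ(m(x, y) - t)`, where `m` and `σ` are the
conditional mean and standard deviation of `X̄'` given `(X̄, Ȳ) = (x, y)`; this `σ` is the
parameter of `ε`. Summing over `t ∈ bℤ` gives `f_{X̄,Ȳ} = f_{X,Y} T / Z` with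
`T = b ∑ₖ f_σ(m - bk)` and `Z = b ∑ₖ f_{√δ₁}(bk) = ∫ f_{X,Y} T`. The flatness factor bounds
`|T - 1| ≤ ε` pointwise, hence `|Z - 1| ≤ ε`, and so `|T / Z - 1| ≤ 2ε / (1 - ε) ≤ 4ε`.
-/

open MeasureTheory ProbabilityTheory

lemma gpdf_nonneg {σ : ℝ} (hσ : 0 ≤ σ) (x : ℝ) : 0 ≤ gpdf σ x := by
  unfold gpdf; positivity

@[fun_prop]
lemma continuous_gpdf (σ : ℝ) : Continuous (gpdf σ) := by
  unfold gpdf; fun_prop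

lemma gpdf_eq_gaussianPDFReal {σ : ℝ} (hσ : 0 < σ) :
    gpdf σ = gaussianPDFReal 0 (σ ^ 2).toNNReal := by
  ext x
  rw [gaussianPDFReal_def, gpdf, Real.coe_toNNReal _ (sq_nonneg σ),
    Real.sqrt_mul (by positivity : (0 : ℝ) ≤ 2 * Real.pi), Real.sqrt_sq hσ.le, one_div]
  simp

lemma lintegral_gpdf {σ : ℝ} (hσ : 0 < σ) : ∫⁻ x, ENNReal.ofReal (gpdf σ x) = 1 := by
  rw [gpdf_eq_gaussianPDFReal hσ]
  exact lintegral_gaussianPDFReal_eq_one 0 (Real.toNNReal_pos.mpr (by positivity)).ne'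

lemma gpdf_le_exp_mul_gpdf {σ x y r : ℝ} (hσ : 0 ≤ σ) (h : y ^ 2 - r ^ 2 ≤ x ^ 2) :
    gpdf σ x ≤ Real.exp (r ^ 2 / (2 * σ ^ 2)) * gpdf σ y := by
  rw [gpdf, gpdf, mul_left_comm, ← Real.exp_add]
  gcongr
  rw [← add_div]
  exact div_le_div_of_nonneg_right (by linarith) (by positivity)

lemma summable_exp_neg_mul_int_sq {a : ℝ} (ha : 0 < a) :
    Summable fun n : ℤ => Real.exp (-a * n ^ 2) := by
  have hnat : Summable fun n : ℕ => Real.exp (-a * (n : ℝ) ^ 2) :=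
    Real.summable_exp_nat_mul_of_ge (neg_lt_zero.mpr ha) fun n => by
      norm_cast; exact Nat.le_self_pow two_ne_zero n
  exact .of_nat_of_neg (by simpa using hnat) (by simpa using hnat)

lemma summable_gpdf_mul_int {σ : ℝ} (hσ : 0 < σ) {c : ℝ} (hc : c ≠ 0) :
    Summable fun n : ℤ => gpdf σ (c * n) := by
  have := (summable_exp_neg_mul_int_sq (a := c ^ 2 / (2 * σ ^ 2)) (by positivity)).mul_left
    (1 / (Real.sqrt (2 * Real.pi) * σ))
  refine this.congr fun n => ?_
  rw [gpdf]; ring_nf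

noncomputable def periodicGpdf (b σ u : ℝ) : ℝ := ∑' k : ℤ, gpdf σ (u - b * k)

@[fun_prop]
lemma measurable_periodicGpdf (b σ : ℝ) : Measurable (periodicGpdf b σ) :=
  Measurable.tsum fun k => by fun_prop

section Periodization

variable {σ b : ℝ}

lemma sq_sub_round_le_sq_sub_mul (hb : b ≠ 0) (u : ℝ) (k : ℤ) :
    b ^ 2 * (k - round (u / b)) ^ 2 / 2 - b ^ 2 / 4 ≤ (u - b * k) ^ 2 := by
  -- `u - b k = b (d - j)` with `|d| ≤ 1/2`, `j = k - round (u / b)`, and `(d - j)² ≥ j²/2 - d²`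
  have hd := abs_le.mp (abs_sub_round (u / b))
  have hu : u - b * k = b * ((u / b - round (u / b)) - (k - round (u / b))) := by
    field_simp; ring
  rw [hu, mul_pow]
  nlinarith [sq_nonneg b, sq_nonneg ((u / b - round (u / b)) * 2 - (k - round (u / b))),
    mul_le_mul_of_nonneg_left (show (u / b - round (u / b)) ^ 2 ≤ 1 / 4 by nlinarith) (sq_nonneg b)]

lemma gpdf_sub_mul_le (hσ : 0 ≤ σ) (hb : b ≠ 0) (u : ℝ) (k : ℤ) :
    gpdf σ (u - b * k) ≤
      Real.exp ((b / 2) ^ 2 / (2 * σ ^ 2)) * gpdf σ (b / Real.sqrt 2 * (k - round (u / b))) := by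
  refine gpdf_le_exp_mul_gpdf hσ ?_
  have := sq_sub_round_le_sq_sub_mul hb u k
  rw [mul_pow, div_pow, div_pow, Real.sq_sqrt zero_le_two]
  linarith

lemma summable_gpdf_sub_mul_int (hσ : 0 < σ) (hb : b ≠ 0) (u : ℝ) :
    Summable fun k : ℤ => gpdf σ (u - b * k) := by
  have hc : b / Real.sqrt 2 ≠ 0 := div_ne_zero hb (by positivity)
  have hdom := ((summable_gpdf_mul_int hσ hc).comp_injective
    (sub_left_injective (b := round (u / b)))).mul_left (Real.exp ((b / 2) ^ 2 / (2 * σ ^ 2)))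
  refine hdom.of_nonneg_of_le (fun k => gpdf_nonneg hσ.le _) fun k => ?_
  simpa using gpdf_sub_mul_le hσ.le hb u k

lemma periodicGpdf_le (hσ : 0 < σ) (hb : b ≠ 0) (u : ℝ) :
    periodicGpdf b σ u ≤
      Real.exp ((b / 2) ^ 2 / (2 * σ ^ 2)) * ∑' n : ℤ, gpdf σ (b / Real.sqrt 2 * n) := by
  have hsum := summable_gpdf_mul_int hσ (div_ne_zero hb (by positivity : Real.sqrt 2 ≠ 0))
  rw [← tsum_mul_left, ← (Equiv.subRight (round (u / b))).tsum_eq]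
  refine (summable_gpdf_sub_mul_int hσ hb u).tsum_le_tsum (fun k => ?_)
    ((((Equiv.subRight (round (u / b))).summable_iff).mpr hsum).mul_left _)
  simpa using gpdf_sub_mul_le hσ.le hb u k

lemma abs_mul_periodicGpdf_sub_one_le_flatness (hσ : 0 < σ) (hb : 0 < b) (u : ℝ) :
    |b * periodicGpdf b σ u - 1| ≤ flatness b σ := by
  obtain ⟨M, hM⟩ : ∃ M, ∀ u, periodicGpdf b σ u ≤ M := ⟨_, periodicGpdf_le hσ hb.ne'⟩
  refine le_ciSup (f := fun u => |b * periodicGpdf b σ u - 1|) ⟨b * M + 1, ?_⟩ u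
  rintro _ ⟨v, rfl⟩
  have h0 : 0 ≤ periodicGpdf b σ v := tsum_nonneg fun k => gpdf_nonneg hσ.le _
  have hv : b * periodicGpdf b σ v ≤ b * M := mul_le_mul_of_nonneg_left (hM v) hb.le
  exact abs_le.mpr ⟨by nlinarith, by linarith⟩

end Periodization

section Bivariate

variable {Δ₁ Δ₂ c : ℝ}

lemma fZ_eq_gpdf_mul_gpdf (h₁ : 0 < Δ₁) (hq : 0 < Δ₁ * Δ₂ - c ^ 2) (z₁ z₂ : ℝ) :
    fZ Δ₁ Δ₂ c z₁ z₂ =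
      gpdf (Real.sqrt Δ₁) z₁ * gpdf (Real.sqrt ((Δ₁ * Δ₂ - c ^ 2) / Δ₁)) (z₂ - c / Δ₁ * z₁) := by
  have hsq : Real.sqrt Δ₁ ^ 2 = Δ₁ := Real.sq_sqrt h₁.le
  rw [fZ, gpdf, gpdf, mul_mul_mul_comm, ← Real.exp_add, hsq, Real.sq_sqrt (by positivity),
    Real.sqrt_div hq.le]
  congr 1
  · have : 0 < Real.sqrt Δ₁ := Real.sqrt_pos.mpr h₁
    have : 0 < Real.sqrt (Δ₁ * Δ₂ - c ^ 2) := Real.sqrt_pos.mpr hq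
    field_simp
    rw [Real.sq_sqrt (by positivity)]
  · congr 1
    generalize hQ : Δ₁ * Δ₂ - c ^ 2 = Q at hq ⊢
    field_simp
    subst hQ
    ring

lemma fZ_nonneg (hq : 0 < Δ₁ * Δ₂ - c ^ 2) (z₁ z₂ : ℝ) : 0 ≤ fZ Δ₁ Δ₂ c z₁ z₂ := by
  have : 0 < Real.sqrt (Δ₁ * Δ₂ - c ^ 2) := Real.sqrt_pos.mpr hq
  unfold fZ; positivity

lemma lintegral_gpdf_mul_gpdf_sub_mul {σ₁ σ₂ : ℝ} (h₁ : 0 < σ₁) (h₂ : 0 < σ₂) (r : ℝ) :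
    ∫⁻ p : ℝ × ℝ, ENNReal.ofReal (gpdf σ₁ p.1 * gpdf σ₂ (p.2 - r * p.1)) = 1 := by
  rw [Measure.volume_eq_prod, lintegral_prod _ (by fun_prop)]
  have hinner (x : ℝ) : ∫⁻ y, ENNReal.ofReal (gpdf σ₁ x * gpdf σ₂ (y - r * x))
      = ENNReal.ofReal (gpdf σ₁ x) := by
    simp_rw [ENNReal.ofReal_mul (gpdf_nonneg h₁.le _)]
    rw [lintegral_const_mul' _ _ ENNReal.ofReal_ne_top,
      lintegral_sub_right_eq_self (fun y => ENNReal.ofReal (gpdf σ₂ y)), lintegral_gpdf h₂,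
      mul_one]
  simp_rw [hinner]
  exact lintegral_gpdf h₁

lemma lintegral_fZ (h₁ : 0 < Δ₁) (hq : 0 < Δ₁ * Δ₂ - c ^ 2) :
    ∫⁻ p : ℝ × ℝ, ENNReal.ofReal (fZ Δ₁ Δ₂ c p.1 p.2) = 1 := by
  simp_rw [fZ_eq_gpdf_mul_gpdf h₁ hq]
  exact lintegral_gpdf_mul_gpdf_sub_mul (Real.sqrt_pos.mpr h₁)
    (Real.sqrt_pos.mpr (by positivity)) _

lemma lintegral_fZ_sub (h₁ : 0 < Δ₁) (hq : 0 < Δ₁ * Δ₂ - c ^ 2) (u v : ℝ) :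
    ∫⁻ p : ℝ × ℝ, ENNReal.ofReal (fZ Δ₁ Δ₂ c (p.1 - u) (p.2 - v)) = 1 := by
  simpa [lintegral_fZ h₁ hq] using lintegral_sub_right_eq_self (μ := volume)
    (fun p : ℝ × ℝ => ENNReal.ofReal (fZ Δ₁ Δ₂ c p.1 p.2)) (u, v)

end Bivariate

section Correlated

variable {ρ : ℝ}

lemma fXY_eq_fZ (x y : ℝ) : fXY ρ x y = fZ 1 1 ρ x y := by
  simp [fXY, fZ]

lemma fXY_nonneg (hρ : 0 < 1 - ρ ^ 2) (x y : ℝ) : 0 ≤ fXY ρ x y := by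
  rw [fXY_eq_fZ]; exact fZ_nonneg (by linarith) x y

lemma lintegral_fXY (hρ : 0 < 1 - ρ ^ 2) :
    ∫⁻ p : ℝ × ℝ, ENNReal.ofReal (fXY ρ p.1 p.2) = 1 := by
  simp only [fXY_eq_fZ]
  exact lintegral_fZ one_pos (by linarith)

lemma integrable_fXY (hρ : 0 < 1 - ρ ^ 2) : Integrable fun p : ℝ × ℝ => fXY ρ p.1 p.2 := by
  have hm : Continuous fun p : ℝ × ℝ => fXY ρ p.1 p.2 := by unfold fXY; fun_prop
  have h0 : 0 ≤ᵐ[volume] fun p : ℝ × ℝ => fXY ρ p.1 p.2 :=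
    .of_forall fun p => fXY_nonneg hρ p.1 p.2
  refine ⟨hm.aestronglyMeasurable, ?_⟩
  rw [hasFiniteIntegral_iff_ofReal h0, lintegral_fXY hρ]
  exact ENNReal.one_lt_top

lemma integral_fXY (hρ : 0 < 1 - ρ ^ 2) : ∫ p : ℝ × ℝ, fXY ρ p.1 p.2 = 1 := by
  have h0 : 0 ≤ᵐ[volume] fun p : ℝ × ℝ => fXY ρ p.1 p.2 :=
    .of_forall fun p => fXY_nonneg hρ p.1 p.2
  rw [integral_eq_lintegral_of_nonneg_ae h0 (integrable_fXY hρ).1, lintegral_fXY hρ,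
    ENNReal.toReal_one]

end Correlated

lemma abs_div_sub_one_le {t z ε : ℝ} (ht : |t - 1| ≤ ε) (hz : |z - 1| ≤ ε) (hε : ε < 1 / 2) :
    |t / z - 1| ≤ 4 * ε := by
  obtain ⟨ht₁, ht₂⟩ := abs_le.mp ht
  obtain ⟨hz₁, hz₂⟩ := abs_le.mp hz
  have hz₀ : 0 < z := by linarith
  rw [div_sub_one hz₀.ne', abs_div, abs_of_pos hz₀, div_le_iff₀ hz₀, abs_le]
  constructor <;> nlinarith

section Tilting

variable {α : Type*} [MeasurableSpace α] {μ : Measure α} {f T : α → ℝ} {ε : ℝ}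

lemma abs_integral_mul_sub_one_le (hf : Integrable f μ) (hf₀ : ∀ a, 0 ≤ f a)
    (hf₁ : ∫ a, f a ∂μ = 1) (hT : AEStronglyMeasurable T μ) (hTε : ∀ a, |T a - 1| ≤ ε) :
    |∫ a, f a * T a ∂μ - 1| ≤ ε := by
  have hfT : Integrable (fun a => f a * T a) μ :=
    hf.mul_bdd hT (c := ε + |1|) (.of_forall fun a => by
      simpa [Real.norm_eq_abs] using (abs_sub_abs_le_abs_sub (T a) 1).trans (hTε a))
  calc |∫ a, f a * T a ∂μ - 1| = ‖∫ a, f a * (T a - 1) ∂μ‖ := by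
        simp_rw [mul_sub, mul_one]; rw [integral_sub hfT hf, hf₁, Real.norm_eq_abs]
    _ ≤ ∫ a, ε * f a ∂μ := norm_integral_le_of_norm_le (hf.const_mul ε) (.of_forall fun a => by
        rw [norm_mul, Real.norm_of_nonneg (hf₀ a), Real.norm_eq_abs, mul_comm]
        exact mul_le_mul_of_nonneg_right (hTε a) (hf₀ a))
    _ = ε := by rw [integral_const_mul, hf₁, mul_one]

theorem integral_abs_mul_div_integral_sub_le (hf : Integrable f μ) (hf₀ : ∀ a, 0 ≤ f a)
    (hf₁ : ∫ a, f a ∂μ = 1) (hT : AEStronglyMeasurable T μ) (hTε : ∀ a, |T a - 1| ≤ ε)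
    (hε : ε < 1 / 2) :
    ∫ a, |f a * T a / ∫ a, f a * T a ∂μ - f a| ∂μ ≤ 4 * ε := by
  have hZ := abs_integral_mul_sub_one_le hf hf₀ hf₁ hT hTε
  calc ∫ a, |f a * T a / ∫ a, f a * T a ∂μ - f a| ∂μ ≤ ∫ a, 4 * ε * f a ∂μ := by
        refine integral_mono_of_nonneg (.of_forall fun a => abs_nonneg _) (hf.const_mul _)
          (.of_forall fun a => ?_)
        dsimp only
        rw [mul_div_assoc, ← mul_sub_one, abs_mul, abs_of_nonneg (hf₀ a), mul_comm]
        exact mul_le_mul_of_nonneg_right (abs_div_sub_one_le (hTε a) hZ hε) (hf₀ a)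
    _ = 4 * ε := by rw [integral_const_mul, hf₁, mul_one]

theorem integral_tsum_mul_eq_tsum {ι : Type*} [Countable ι] {w : ι → ℝ} {g : ι → α → ℝ}
    (hw₀ : ∀ i, 0 ≤ w i) (hw : Summable w) (hg₀ : ∀ i a, 0 ≤ g i a) (hg : ∀ i, Measurable (g i))
    (hg₁ : ∀ i, ∫⁻ a, ENNReal.ofReal (g i a) ∂μ = 1) (hwg : ∀ a, Summable fun i => w i * g i a) :
    ∫ a, ∑' i, w i * g i a ∂μ = ∑' i, w i := by
  have hwg₀ (i : ι) (a : α) : 0 ≤ w i * g i a := mul_nonneg (hw₀ i) (hg₀ i a)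
  rw [integral_eq_lintegral_of_nonneg_ae (.of_forall fun a => tsum_nonneg (hwg₀ · a))
    (Measurable.tsum fun i => (hg i).const_mul (w i)).aestronglyMeasurable]
  simp_rw [ENNReal.ofReal_tsum_of_nonneg (hwg₀ · _) (hwg _), ENNReal.ofReal_mul (hw₀ _)]
  rw [lintegral_tsum fun i => ((hg i).ennreal_ofReal.const_mul _).aemeasurable]
  simp_rw [lintegral_const_mul' _ _ ENNReal.ofReal_ne_top, hg₁, mul_one]
  rw [← ENNReal.ofReal_tsum_of_nonneg hw₀ hw, ENNReal.toReal_ofReal (tsum_nonneg hw₀)]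

end Tilting

/-- In the continuous model `X̄' ~ N(0, s₁²)` (with `sᵢ = √δᵢ`), the law of `X̄'` given
`(X̄, Ȳ) = (x, y)` is `N(condMean ρ s₁ s₂ x y, (condStd ρ s₁ s₂)²)`. -/
noncomputable def condMean (ρ s₁ s₂ x y : ℝ) : ℝ :=
  ((s₁ ^ 2 * (1 - s₂ ^ 2) - (ρ - s₁ * s₂) * (s₁ * s₂)) * x
    + (s₁ * s₂ * (1 - s₁ ^ 2) - (ρ - s₁ * s₂) * s₁ ^ 2) * y) / (1 - ρ ^ 2)

noncomputable def condStd (ρ s₁ s₂ : ℝ) : ℝ :=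
  Real.sqrt (s₁ ^ 2 * ((1 - s₁ ^ 2) * (1 - s₂ ^ 2) - (ρ - s₁ * s₂) ^ 2) / (1 - ρ ^ 2))

section Model

variable {ρ s₁ s₂ : ℝ}

lemma condStd_pos (hs₁ : 0 < s₁) (hρ : 0 < 1 - ρ ^ 2)
    (hq : 0 < (1 - s₁ ^ 2) * (1 - s₂ ^ 2) - (ρ - s₁ * s₂) ^ 2) : 0 < condStd ρ s₁ s₂ :=
  Real.sqrt_pos.mpr (by positivity)

lemma gpdf_mul_fZ_eq_fXY_mul_gpdf (hs₁ : 0 < s₁) (hρ : 0 < 1 - ρ ^ 2)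
    (hq : 0 < (1 - s₁ ^ 2) * (1 - s₂ ^ 2) - (ρ - s₁ * s₂) ^ 2) (x y t : ℝ) :
    gpdf s₁ t * fZ (1 - s₁ ^ 2) (1 - s₂ ^ 2) (ρ - s₁ * s₂) (x - t) (y - s₂ / s₁ * t) =
      fXY ρ x y * gpdf (condStd ρ s₁ s₂) (condMean ρ s₁ s₂ x y - t) := by
  rw [gpdf, gpdf, fZ, fXY, condStd, mul_mul_mul_comm, mul_mul_mul_comm (1 / (2 * π * _)),
    ← Real.exp_add, ← Real.exp_add, Real.sq_sqrt (by positivity)]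
  congr 1
  · rw [Real.sqrt_div (by positivity), Real.sqrt_mul (sq_nonneg s₁), Real.sqrt_sq hs₁.le]
    have : 0 < Real.sqrt ((1 - s₁ ^ 2) * (1 - s₂ ^ 2) - (ρ - s₁ * s₂) ^ 2) := Real.sqrt_pos.mpr hq
    have : 0 < Real.sqrt (1 - ρ ^ 2) := Real.sqrt_pos.mpr hρ
    field_simp
  · congr 1
    unfold condMean
    generalize hQ : (1 - s₁ ^ 2) * (1 - s₂ ^ 2) - (ρ - s₁ * s₂) ^ 2 = Q at hq ⊢
    field_simp
    subst hQ
    ring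

lemma fXY_mul_periodicGpdf_condMean (hs₁ : 0 < s₁) (hρ : 0 < 1 - ρ ^ 2)
    (hq : 0 < (1 - s₁ ^ 2) * (1 - s₂ ^ 2) - (ρ - s₁ * s₂) ^ 2) (b x y : ℝ) :
    fXY ρ x y * periodicGpdf b (condStd ρ s₁ s₂) (condMean ρ s₁ s₂ x y) =
      ∑' k : ℤ, gpdf s₁ (b * k) *
        fZ (1 - s₁ ^ 2) (1 - s₂ ^ 2) (ρ - s₁ * s₂) (x - b * k) (y - s₂ / s₁ * (b * k)) := by
  simp_rw [periodicGpdf, ← tsum_mul_left, gpdf_mul_fZ_eq_fXY_mul_gpdf hs₁ hρ hq]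

lemma fXbarYbar2_eq_fXY_mul_periodicGpdf_div (hs₁ : 0 < s₁) (hs₂ : 0 ≤ s₂) (hρ : 0 < 1 - ρ ^ 2)
    (hq : 0 < (1 - s₁ ^ 2) * (1 - s₂ ^ 2) - (ρ - s₁ * s₂) ^ 2) (b x y : ℝ) :
    fXbarYbar2 ρ (1 - s₁ ^ 2) (1 - s₂ ^ 2) b x y =
      fXY ρ x y * periodicGpdf b (condStd ρ s₁ s₂) (condMean ρ s₁ s₂ x y) /
        ∑' k : ℤ, gpdf s₁ (b * k) := by
  have h₁ : Real.sqrt (s₁ ^ 2) = s₁ := Real.sqrt_sq hs₁.le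
  have h₁₂ : Real.sqrt (s₁ ^ 2 * s₂ ^ 2) = s₁ * s₂ := by
    rw [← mul_pow, Real.sqrt_sq (by positivity)]
  have h₂₁ : Real.sqrt (s₂ ^ 2 / s₁ ^ 2) = s₂ / s₁ := by
    rw [← div_pow, Real.sqrt_sq (by positivity)]
  rw [fXY_mul_periodicGpdf_condMean hs₁ hρ hq]
  simp only [fXbarYbar2, dgauss, sub_sub_cancel, h₁, h₁₂, h₂₁, div_mul_eq_mul_div, tsum_div_const]

lemma integral_fXY_mul_periodicGpdf_condMean {b : ℝ} (hb : b ≠ 0) (hs₁ : 0 < s₁)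
    (hΔ₁ : 0 < 1 - s₁ ^ 2) (hρ : 0 < 1 - ρ ^ 2)
    (hq : 0 < (1 - s₁ ^ 2) * (1 - s₂ ^ 2) - (ρ - s₁ * s₂) ^ 2) :
    ∫ p : ℝ × ℝ, fXY ρ p.1 p.2 * periodicGpdf b (condStd ρ s₁ s₂) (condMean ρ s₁ s₂ p.1 p.2) =
      ∑' k : ℤ, gpdf s₁ (b * k) := by
  simp_rw [fXY_mul_periodicGpdf_condMean hs₁ hρ hq]
  refine integral_tsum_mul_eq_tsum (fun k => gpdf_nonneg hs₁.le _) (summable_gpdf_mul_int hs₁ hb)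
    (fun k p => fZ_nonneg hq _ _) (fun k => by unfold fZ; fun_prop)
    (fun k => lintegral_fZ_sub hΔ₁ hq _ _) fun p => ?_
  simp_rw [gpdf_mul_fZ_eq_fXY_mul_gpdf hs₁ hρ hq]
  exact (summable_gpdf_sub_mul_int (condStd_pos hs₁ hρ hq) hb _).mul_left _

end Model

theorem region2_variation_distance_le_general (ρ Δ₁ Δ₂ b : ℝ) (hb : 0 < b) (hρ0 : 0 < ρ)
    (hρ1 : ρ < 1) (hΔ₁0 : 0 < Δ₁) (hΔ₁1 : Δ₁ < 1) (hΔ₂1 : Δ₂ < 1)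
    (hpos : 0 < Δ₁ * Δ₂ - (ρ - Real.sqrt ((1 - Δ₁) * (1 - Δ₂))) ^ 2)
    (hε : flatness b (Real.sqrt ((1 - Δ₁) *
        (Δ₁ * Δ₂ - (ρ - Real.sqrt ((1 - Δ₁) * (1 - Δ₂))) ^ 2) / (1 - ρ ^ 2))) < 1 / 2) :
    ∫ p : ℝ × ℝ, |fXbarYbar2 ρ Δ₁ Δ₂ b p.1 p.2 - fXY ρ p.1 p.2| ≤
      4 * flatness b (Real.sqrt ((1 - Δ₁) *
        (Δ₁ * Δ₂ - (ρ - Real.sqrt ((1 - Δ₁) * (1 - Δ₂))) ^ 2) / (1 - ρ ^ 2))) := by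
  obtain ⟨s₁, hs₁, rfl⟩ : ∃ s, 0 < s ∧ Δ₁ = 1 - s ^ 2 :=
    ⟨Real.sqrt (1 - Δ₁), Real.sqrt_pos.mpr (by linarith), by rw [Real.sq_sqrt (by linarith)]; ring⟩
  obtain ⟨s₂, hs₂, rfl⟩ : ∃ s, 0 ≤ s ∧ Δ₂ = 1 - s ^ 2 :=
    ⟨Real.sqrt (1 - Δ₂), Real.sqrt_nonneg _, by rw [Real.sq_sqrt (by linarith)]; ring⟩
  have hρ : 0 < 1 - ρ ^ 2 := by nlinarith
  have hs₁s₂ : Real.sqrt (s₁ ^ 2 * s₂ ^ 2) = s₁ * s₂ := by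
    rw [← mul_pow, Real.sqrt_sq (by positivity)]
  simp only [sub_sub_cancel, hs₁s₂] at hpos hε ⊢
  change flatness b (condStd ρ s₁ s₂) < 1 / 2 at hε
  change _ ≤ 4 * flatness b (condStd ρ s₁ s₂)
  set θ := fun p : ℝ × ℝ => b * periodicGpdf b (condStd ρ s₁ s₂) (condMean ρ s₁ s₂ p.1 p.2)
  have hθ : Measurable θ := by unfold θ condMean; fun_prop
  have hθε (p : ℝ × ℝ) : |θ p - 1| ≤ flatness b (condStd ρ s₁ s₂) :=
    abs_mul_periodicGpdf_sub_one_le_flatness (condStd_pos hs₁ hρ hpos) hb _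
  have hZ : ∫ p : ℝ × ℝ, fXY ρ p.1 p.2 * θ p = b * ∑' k : ℤ, gpdf s₁ (b * k) := by
    simp_rw [θ, mul_left_comm _ b]
    rw [integral_const_mul, integral_fXY_mul_periodicGpdf_condMean hb.ne' hs₁ hΔ₁0 hρ hpos]
  calc ∫ p : ℝ × ℝ, |fXbarYbar2 ρ (1 - s₁ ^ 2) (1 - s₂ ^ 2) b p.1 p.2 - fXY ρ p.1 p.2|
      = ∫ p : ℝ × ℝ,
          |fXY ρ p.1 p.2 * θ p / (∫ p : ℝ × ℝ, fXY ρ p.1 p.2 * θ p) - fXY ρ p.1 p.2| := by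
        simp_rw [hZ, fXbarYbar2_eq_fXY_mul_periodicGpdf_div hs₁ hs₂ hρ hpos, θ, mul_left_comm _ b,
          mul_div_mul_left _ _ hb.ne']
    _ ≤ 4 * flatness b (condStd ρ s₁ s₂) :=
        integral_abs_mul_div_integral_sub_le (integrable_fXY hρ) (fun p => fXY_nonneg hρ p.1 p.2)
          (integral_fXY hρ) hθ.aestronglyMeasurable hθε hε

/-- Lemma 3, first part: with `δᵢ = 1 − Δᵢ`, `c = ρ − √(δ₁δ₂)`,
`Δ₁Δ₂ − c² > 0` and `ε = ε_Λ(√(δ₁(Δ₁Δ₂ − c²)/(1−ρ²))) < 1/2`, the L¹ (variation) distance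
between the mixture density `f_{X̄,Ȳ}` and the bivariate Gaussian density `f_{X,Y}` is at
most `4ε`. -/
theorem region2_variation_distance_le (ρ Δ₁ Δ₂ b : ℝ) (hb : 0 < b) (hρ0 : 0 < ρ)
    (hρ1 : ρ < 1) (hΔ₁0 : 0 < Δ₁) (hΔ₁1 : Δ₁ < 1) (hΔ₂0 : 0 < Δ₂) (hΔ₂1 : Δ₂ < 1)
    (hpos : 0 < Δ₁ * Δ₂ - (ρ - Real.sqrt ((1 - Δ₁) * (1 - Δ₂))) ^ 2)
    (hε : flatness b (Real.sqrt ((1 - Δ₁) *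
        (Δ₁ * Δ₂ - (ρ - Real.sqrt ((1 - Δ₁) * (1 - Δ₂))) ^ 2) / (1 - ρ ^ 2))) < 1 / 2) :
    ∫ p : ℝ × ℝ, |fXbarYbar2 ρ Δ₁ Δ₂ b p.1 p.2 - fXY ρ p.1 p.2| ≤
      4 * flatness b (Real.sqrt ((1 - Δ₁) *
        (Δ₁ * Δ₂ - (ρ - Real.sqrt ((1 - Δ₁) * (1 - Δ₂))) ^ 2) / (1 - ρ ^ 2))) :=
  region2_variation_distance_le_general ρ Δ₁ Δ₂ b hb hρ0 hρ1 hΔ₁0 hΔ₁1 hΔ₂1 hpos hε
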